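/- arXiv:2308.02260 — 4 statements merged into one kernel-verified Lean document; each statement's English description precedes it below -/
import Mathlib

section
/- (Level sets of the partial trace estimator.) Let p₁, p₂ be positive integers, let Σ₁ be a p₁ × p₁ real positive definite matrix, Σ₂ a p₂ × p₂ real positive definite matrix, and let S be a p₁p₂ × p₁p₂ real positive definite matrix. Then P(S) = Σ₁ ⊗ Σ₂ if and only if tr₁(S) = tr(Σ₂)·Σ₁ and tr₂(S) = tr(Σ₁)·Σ₂. -/
/-!
Both partial traces preserve the trace, so `P(S)` has the same partial traces as `S` whenever
`tr S ≠ 0`, and `P(S)` depends on `S` only through its partial traces. Hence `P(S) = Σ₁ ⊗ Σ₂`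
exactly when `S` has the partial traces of `Σ₁ ⊗ Σ₂`, which are `tr(Σ₂) Σ₁` and `tr(Σ₁) Σ₂`.
-/

open Matrix Kronecker BigOperators

def ptr1 {p₁ p₂ : ℕ} (S : Matrix (Fin p₁ × Fin p₂) (Fin p₁ × Fin p₂) ℝ) :
    Matrix (Fin p₁) (Fin p₁) ℝ :=
  Matrix.of fun i i' => ∑ j : Fin p₂, S (i, j) (i', j)

def ptr2 {p₁ p₂ : ℕ} (S : Matrix (Fin p₁ × Fin p₂) (Fin p₁ × Fin p₂) ℝ) :
    Matrix (Fin p₂) (Fin p₂) ℝ :=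
  Matrix.of fun j j' => ∑ i : Fin p₁, S (i, j) (i, j')

/-- The partial trace estimator `P(S) = tr(S)⁻¹ • (tr₁(S) ⊗ tr₂(S))`. -/
noncomputable def ptEst {p₁ p₂ : ℕ} (S : Matrix (Fin p₁ × Fin p₂) (Fin p₁ × Fin p₂) ℝ) :
    Matrix (Fin p₁ × Fin p₂) (Fin p₁ × Fin p₂) ℝ :=
  (S.trace)⁻¹ • (ptr1 S ⊗ₖ ptr2 S)

section PartialTrace

variable {p₁ p₂ : ℕ}

lemma trace_ptr1 (S : Matrix (Fin p₁ × Fin p₂) (Fin p₁ × Fin p₂) ℝ) :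
    (ptr1 S).trace = S.trace := by
  simp [Matrix.trace, ptr1, ← Finset.sum_product', Finset.univ_product_univ]

lemma trace_ptr2 (S : Matrix (Fin p₁ × Fin p₂) (Fin p₁ × Fin p₂) ℝ) :
    (ptr2 S).trace = S.trace := by
  simp only [Matrix.trace, ptr2, Matrix.diag, Matrix.of_apply]
  rw [Finset.sum_comm]
  simp [← Finset.sum_product', Finset.univ_product_univ]

lemma ptr1_smul (c : ℝ) (S : Matrix (Fin p₁ × Fin p₂) (Fin p₁ × Fin p₂) ℝ) :
    ptr1 (c • S) = c • ptr1 S := by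
  ext i i'
  simp [ptr1, Finset.mul_sum]

lemma ptr2_smul (c : ℝ) (S : Matrix (Fin p₁ × Fin p₂) (Fin p₁ × Fin p₂) ℝ) :
    ptr2 (c • S) = c • ptr2 S := by
  ext j j'
  simp [ptr2, Finset.mul_sum]

lemma ptr1_kronecker (A : Matrix (Fin p₁) (Fin p₁) ℝ) (B : Matrix (Fin p₂) (Fin p₂) ℝ) :
    ptr1 (A ⊗ₖ B) = B.trace • A := by
  ext i i'
  simp [ptr1, Matrix.trace, Finset.mul_sum, mul_comm]

lemma ptr2_kronecker (A : Matrix (Fin p₁) (Fin p₁) ℝ) (B : Matrix (Fin p₂) (Fin p₂) ℝ) :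
    ptr2 (A ⊗ₖ B) = A.trace • B := by
  ext j j'
  simp [ptr2, Matrix.trace, Finset.sum_mul]

end PartialTrace

section Estimator

variable {p₁ p₂ : ℕ} {S T : Matrix (Fin p₁ × Fin p₂) (Fin p₁ × Fin p₂) ℝ}

lemma ptr1_ptEst (hS : S.trace ≠ 0) : ptr1 (ptEst S) = ptr1 S := by
  rw [ptEst, ptr1_smul, ptr1_kronecker, trace_ptr2, smul_smul, inv_mul_cancel₀ hS, one_smul]

lemma ptr2_ptEst (hS : S.trace ≠ 0) : ptr2 (ptEst S) = ptr2 S := by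
  rw [ptEst, ptr2_smul, ptr2_kronecker, trace_ptr1, smul_smul, inv_mul_cancel₀ hS, one_smul]

lemma ptEst_eq_of_ptr_eq (h₁ : ptr1 S = ptr1 T) (h₂ : ptr2 S = ptr2 T) : ptEst S = ptEst T := by
  rw [ptEst, ptEst, ← trace_ptr1 S, ← trace_ptr1 T, h₁, h₂]

lemma ptEst_kronecker {A : Matrix (Fin p₁) (Fin p₁) ℝ} {B : Matrix (Fin p₂) (Fin p₂) ℝ}
    (hAB : (A ⊗ₖ B).trace ≠ 0) : ptEst (A ⊗ₖ B) = A ⊗ₖ B := by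
  rw [trace_kronecker] at hAB
  rw [ptEst, ptr1_kronecker, ptr2_kronecker, smul_kronecker, kronecker_smul, smul_smul,
    smul_smul, trace_kronecker, mul_assoc, mul_comm B.trace, inv_mul_cancel₀ hAB, one_smul]

lemma ptEst_eq_kronecker_iff (A : Matrix (Fin p₁) (Fin p₁) ℝ) (B : Matrix (Fin p₂) (Fin p₂) ℝ)
    (hS : S.trace ≠ 0) :
    ptEst S = A ⊗ₖ B ↔ ptr1 S = B.trace • A ∧ ptr2 S = A.trace • B := by
  rw [← ptr1_kronecker, ← ptr2_kronecker]
  constructor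
  · intro h
    rw [← ptr1_ptEst hS, ← ptr2_ptEst hS, h]
    exact ⟨rfl, rfl⟩
  · rintro ⟨h₁, h₂⟩
    have hAB : (A ⊗ₖ B).trace ≠ 0 := by rwa [← trace_ptr1, ← h₁, trace_ptr1]
    rw [ptEst_eq_of_ptr_eq h₁ h₂, ptEst_kronecker hAB]

end Estimator

theorem stmt6_general (p₁ p₂ : ℕ) (hp₁ : 0 < p₁) (hp₂ : 0 < p₂)
    (Sigma1 : Matrix (Fin p₁) (Fin p₁) ℝ)
    (Sigma2 : Matrix (Fin p₂) (Fin p₂) ℝ)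
    (S : Matrix (Fin p₁ × Fin p₂) (Fin p₁ × Fin p₂) ℝ) (hS : S.PosDef) :
    ptEst S = Sigma1 ⊗ₖ Sigma2 ↔
      ptr1 S = Sigma2.trace • Sigma1 ∧ ptr2 S = Sigma1.trace • Sigma2 := by
  have : Nonempty (Fin p₁ × Fin p₂) := ⟨(⟨0, hp₁⟩, ⟨0, hp₂⟩)⟩
  exact ptEst_eq_kronecker_iff Sigma1 Sigma2 hS.trace_pos.ne'

/-- Level sets of the partial trace estimator: `P(S) = Σ₁ ⊗ Σ₂` iff `S` has the
same partial traces as `Σ₁ ⊗ Σ₂`. Here `Sigma1, Sigma2` play the role of `Σ₁, Σ₂`. -/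
theorem stmt6 (p₁ p₂ : ℕ) (hp₁ : 0 < p₁) (hp₂ : 0 < p₂)
    (Sigma1 : Matrix (Fin p₁) (Fin p₁) ℝ) (hS1 : Sigma1.PosDef)
    (Sigma2 : Matrix (Fin p₂) (Fin p₂) ℝ) (hS2 : Sigma2.PosDef)
    (S : Matrix (Fin p₁ × Fin p₂) (Fin p₁ × Fin p₂) ℝ) (hS : S.PosDef) :
    ptEst S = Sigma1 ⊗ₖ Sigma2 ↔
      ptr1 S = Sigma2.trace • Sigma1 ∧ ptr2 S = Sigma1.trace • Sigma2 :=
  stmt6_general p₁ p₂ hp₁ hp₂ Sigma1 Sigma2 S hS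
end

section
/- (Orthogonality of the MLE auxiliary tangent space to the Kronecker tangent space.) Let p₁, p₂ be positive integers, Σ₁ a p₁ × p₁ real positive definite matrix, Σ₂ a p₂ × p₂ real positive definite matrix, and set Σ = Σ₁ ⊗ Σ₂. Let S be a real p₁p₂ × p₁p₂ matrix satisfying tr₁(Σ⁻¹·S) = 0 and tr₂(Σ⁻¹·S) = 0. Then for every real p₁ × p₁ matrix H₁ and every real p₂ × p₂ matrix H₂, tr(Σ⁻¹·S·Σ⁻¹·(H₁ ⊗ Σ₂)) = 0 and tr(Σ⁻¹·S·Σ⁻¹·(Σ₁ ⊗ H₂)) = 0. -/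
open Matrix Kronecker BigOperators

lemma tr_mul_kron_one {p₁ p₂ : ℕ} (M : Matrix (Fin p₁ × Fin p₂) (Fin p₁ × Fin p₂) ℝ)
    (A : Matrix (Fin p₁) (Fin p₁) ℝ) :
    (M * (A ⊗ₖ (1 : Matrix (Fin p₂) (Fin p₂) ℝ))).trace = (ptr1 M * A).trace := by
  simp only [Matrix.trace, Matrix.diag, Matrix.mul_apply, ptr1, Matrix.of_apply,
    kroneckerMap_apply, Matrix.one_apply, Fintype.sum_prod_type, mul_ite, mul_one, mul_zero,
    Finset.sum_ite_eq', Finset.mem_univ, if_true, Finset.sum_mul]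
  exact Finset.sum_congr rfl fun x _ => Finset.sum_comm ..

lemma tr_mul_one_kron {p₁ p₂ : ℕ} (M : Matrix (Fin p₁ × Fin p₂) (Fin p₁ × Fin p₂) ℝ)
    (B : Matrix (Fin p₂) (Fin p₂) ℝ) :
    (M * ((1 : Matrix (Fin p₁) (Fin p₁) ℝ) ⊗ₖ B)).trace = (ptr2 M * B).trace := by
  simp only [Matrix.trace, Matrix.diag, Matrix.mul_apply, ptr2, Matrix.of_apply,
    kroneckerMap_apply, Matrix.one_apply, Fintype.sum_prod_type, mul_ite, mul_zero, ite_mul, one_mul, zero_mul,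
    Finset.sum_ite_eq', Finset.mem_univ, if_true, Finset.sum_mul]
  conv_lhs => enter [2, x, 2, x1]; rw [Finset.sum_comm]
  simp only [Finset.sum_ite_eq', Finset.mem_univ, if_true]
  rw [Finset.sum_comm]
  exact Finset.sum_congr rfl fun _ _ => Finset.sum_comm ..

/-- Orthogonality of the MLE auxiliary tangent space to the Kronecker tangent space.
Here `Sigma1, Sigma2` play the role of `Σ₁, Σ₂`. -/
theorem stmt8 (p₁ p₂ : ℕ) (hp₁ : 0 < p₁) (hp₂ : 0 < p₂)
    (Sigma1 : Matrix (Fin p₁) (Fin p₁) ℝ) (hS1 : Sigma1.PosDef)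
    (Sigma2 : Matrix (Fin p₂) (Fin p₂) ℝ) (hS2 : Sigma2.PosDef)
    (S : Matrix (Fin p₁ × Fin p₂) (Fin p₁ × Fin p₂) ℝ)
    (h1 : ptr1 ((Sigma1 ⊗ₖ Sigma2)⁻¹ * S) = 0)
    (h2 : ptr2 ((Sigma1 ⊗ₖ Sigma2)⁻¹ * S) = 0) :
    ∀ (H₁ : Matrix (Fin p₁) (Fin p₁) ℝ) (H₂ : Matrix (Fin p₂) (Fin p₂) ℝ),
      ((Sigma1 ⊗ₖ Sigma2)⁻¹ * S * (Sigma1 ⊗ₖ Sigma2)⁻¹ * (H₁ ⊗ₖ Sigma2)).trace = 0 ∧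
        ((Sigma1 ⊗ₖ Sigma2)⁻¹ * S * (Sigma1 ⊗ₖ Sigma2)⁻¹ * (Sigma1 ⊗ₖ H₂)).trace = 0 := by
  intro H₁ H₂
  have hinv : (Sigma1 ⊗ₖ Sigma2)⁻¹ = Sigma1⁻¹ ⊗ₖ Sigma2⁻¹ := Matrix.inv_kronecker _ _
  have e1 : (Sigma1 ⊗ₖ Sigma2)⁻¹ * (H₁ ⊗ₖ Sigma2) = (Sigma1⁻¹ * H₁) ⊗ₖ (1 : Matrix (Fin p₂) (Fin p₂) ℝ) := by
    rw [hinv, ← Matrix.mul_kronecker_mul, Matrix.nonsing_inv_mul _ hS2.det_pos.ne'.isUnit]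
  have e2 : (Sigma1 ⊗ₖ Sigma2)⁻¹ * (Sigma1 ⊗ₖ H₂) = (1 : Matrix (Fin p₁) (Fin p₁) ℝ) ⊗ₖ (Sigma2⁻¹ * H₂) := by
    rw [hinv, ← Matrix.mul_kronecker_mul, Matrix.nonsing_inv_mul _ hS1.det_pos.ne'.isUnit]
  constructor
  · rw [Matrix.mul_assoc, e1, tr_mul_kron_one, h1, Matrix.zero_mul, Matrix.trace_zero]
  · rw [Matrix.mul_assoc, e2, tr_mul_one_kron, h2, Matrix.zero_mul, Matrix.trace_zero]
end

section
/- (Product decomposition of the Fisher information metric under the orthogonal parameterization.) Let p₁, p₂ be positive integers, Σ̃₁ a p₁ × p₁ real positive definite matrix and Σ̃₂ a p₂ × p₂ real positive definite matrix. Let H₁ be a real p₁ × p₁ matrix with tr(Σ̃₁⁻¹·H₁) = 0 and H₂ a real p₂ × p₂ matrix with tr(Σ̃₂⁻¹·H₂) = 0, and let v, c ∈ ℝ. Set Σ = e^c·(Σ̃₁ ⊗ Σ̃₂) and X = v·Σ + e^c·(H₁ ⊗ Σ̃₂) + e^c·(Σ̃₁ ⊗ H₂). Then tr(Σ⁻¹·X·Σ⁻¹·X)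 = p₁·p₂·v² + p₂·tr(Σ̃₁⁻¹·H₁·Σ̃₁⁻¹·H₁) + p₁·tr(Σ̃₂⁻¹·H₂·Σ̃₂⁻¹·H₂). -/
open Matrix Kronecker BigOperators

/-- Product decomposition of the Fisher information metric under the orthogonal
parameterization `(c, Σ̃₁, Σ̃₂) ↦ e^c (Σ̃₁ ⊗ Σ̃₂)`.
Here `T₁, T₂` play the role of `Σ̃₁, Σ̃₂`, `Sg` of `Σ`. -/
theorem stmt12 (p₁ p₂ : ℕ) (hp₁ : 0 < p₁) (hp₂ : 0 < p₂)
    (T₁ : Matrix (Fin p₁) (Fin p₁) ℝ) (hT₁ : T₁.PosDef)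
    (T₂ : Matrix (Fin p₂) (Fin p₂) ℝ) (hT₂ : T₂.PosDef)
    (H₁ : Matrix (Fin p₁) (Fin p₁) ℝ) (hH₁ : (T₁⁻¹ * H₁).trace = 0)
    (H₂ : Matrix (Fin p₂) (Fin p₂) ℝ) (hH₂ : (T₂⁻¹ * H₂).trace = 0)
    (v c : ℝ)
    (Sg : Matrix (Fin p₁ × Fin p₂) (Fin p₁ × Fin p₂) ℝ)
    (hSg : Sg = Real.exp c • (T₁ ⊗ₖ T₂))
    (X : Matrix (Fin p₁ × Fin p₂) (Fin p₁ × Fin p₂) ℝ)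
    (hX : X = v • Sg + Real.exp c • (H₁ ⊗ₖ T₂) + Real.exp c • (T₁ ⊗ₖ H₂)) :
    (Sg⁻¹ * X * Sg⁻¹ * X).trace =
      (p₁ : ℝ) * (p₂ : ℝ) * v ^ 2 + (p₂ : ℝ) * (T₁⁻¹ * H₁ * T₁⁻¹ * H₁).trace +
        (p₁ : ℝ) * (T₂⁻¹ * H₂ * T₂⁻¹ * H₂).trace := by
  have hec : Real.exp c ≠ 0 := (Real.exp_pos c).ne'
  have h1 : T₁⁻¹ * T₁ = 1 := nonsing_inv_mul _ hT₁.det_pos.ne'.isUnit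
  have h2 : T₂⁻¹ * T₂ = 1 := nonsing_inv_mul _ hT₂.det_pos.ne'.isUnit
  -- the explicit inverse of Sg
  have hSinv : Sg⁻¹ = (Real.exp c)⁻¹ • (T₁⁻¹ ⊗ₖ T₂⁻¹) := by
    apply inv_eq_left_inv
    rw [hSg, smul_mul_smul_comm, inv_mul_cancel₀ hec, one_smul,
      ← mul_kronecker_mul, h1, h2, one_kronecker_one]
  set A := T₁⁻¹ * H₁ with hA
  set B := T₂⁻¹ * H₂ with hB
  have key : Sg⁻¹ * X = v • (1 : Matrix (Fin p₁ × Fin p₂) (Fin p₁ × Fin p₂) ℝ)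
      + A ⊗ₖ (1 : Matrix (Fin p₂) (Fin p₂) ℝ) + (1 : Matrix (Fin p₁) (Fin p₁) ℝ) ⊗ₖ B := by
    rw [hX, mul_add, mul_add, Matrix.mul_smul, hSinv, hSg, smul_mul_smul_comm,
      smul_mul_smul_comm, smul_mul_smul_comm, inv_mul_cancel₀ hec, one_smul, one_smul,
      one_smul, ← mul_kronecker_mul, ← mul_kronecker_mul, ← mul_kronecker_mul,
      h1, h2, one_kronecker_one]
  have hrw : Sg⁻¹ * X * Sg⁻¹ * X = Sg⁻¹ * X * (Sg⁻¹ * X) := by rw [mul_assoc]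
  rw [hrw, key]
  simp only [add_mul, mul_add, smul_mul_assoc, mul_smul_comm, one_mul, mul_one,
    ← mul_kronecker_mul, trace_add, trace_smul, trace_kronecker, trace_one, smul_eq_mul,
    one_mul, mul_one]
  have t1 : A.trace = 0 := hH₁
  have t2 : B.trace = 0 := hH₂
  simp only [t1, t2, Fintype.card_fin, mul_zero, zero_mul, add_zero, zero_add]
  rw [hA, hB, ← mul_assoc (T₁⁻¹ * H₁), ← mul_assoc (T₂⁻¹ * H₂)]
  simp [Fintype.card_prod, Fintype.card_fin]
  ring
end

section
/- (Non-orthogonality of the partial trace auxiliary space: achievable angle determined by eigenvalue dispersion.) Let p₁ ≥ 1 and p₂ ≥ 2 be integers, let λ ∈ ℝ^{p₁} have all entries strictly positive and not be a scalar multiple of the all-ones vector, and let γ ∈ ℝ^{p₂} have all entries strictly positive. Set Σ = diag(λ) ⊗ diag(γ) and define the inner product ⟨A,B⟩_Σ = tr(Σ⁻¹·A·Σ⁻¹·B) on p₁p₂ × p₁p₂ real matrices. Then there exist a nonzero symmetric p₁p₂ × p₁p₂ matrix V with tr₁(V) = 0 and tr₂(V) = 0, and a nonzero symmetric p₂ ×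 p₂ matrix H₂, such that with H = diag(λ) ⊗ H₂ one has ⟨V,H⟩_Σ² = (1 − (Σ_i λ_i)²/(p₁·Σ_i λ_i²))·⟨V,V⟩_Σ·⟨H,H⟩_Σ. -/
open Matrix Kronecker BigOperators

/-- Non-orthogonality of the partial trace auxiliary space: with
`Σ = diag(λ) ⊗ diag(γ)` and inner product `⟨A,B⟩_Σ = tr(Σ⁻¹AΣ⁻¹B)`, there are a nonzero
symmetric `V` with vanishing partial traces and a nonzero symmetric `H₂` such that, with
`H = diag(λ) ⊗ H₂`, the squared inner product `⟨V,H⟩_Σ²` equals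
`(1 − (∑λ)²/(p₁ ∑λ²)) ⟨V,V⟩_Σ ⟨H,H⟩_Σ`. -/
theorem stmt18 (p₁ p₂ : ℕ) (hp₁ : 1 ≤ p₁) (hp₂ : 2 ≤ p₂)
    (lam : Fin p₁ → ℝ) (gam : Fin p₂ → ℝ)
    (hlam : ∀ i, 0 < lam i) (hgam : ∀ j, 0 < gam j)
    (hnc : ¬ ∃ c : ℝ, ∀ i, lam i = c) :
    ∃ V : Matrix (Fin p₁ × Fin p₂) (Fin p₁ × Fin p₂) ℝ,
      V.IsSymm ∧ V ≠ 0 ∧ ptr1 V = 0 ∧ ptr2 V = 0 ∧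
        ∃ H₂ : Matrix (Fin p₂) (Fin p₂) ℝ, H₂.IsSymm ∧ H₂ ≠ 0 ∧
          (((Matrix.diagonal lam ⊗ₖ Matrix.diagonal gam)⁻¹ * V *
              (Matrix.diagonal lam ⊗ₖ Matrix.diagonal gam)⁻¹ *
              (Matrix.diagonal lam ⊗ₖ H₂)).trace) ^ 2 =
            (1 - (∑ i, lam i) ^ 2 / ((p₁ : ℝ) * ∑ i, lam i ^ 2)) *
              ((Matrix.diagonal lam ⊗ₖ Matrix.diagonal gam)⁻¹ * V *
                (Matrix.diagonal lam ⊗ₖ Matrix.diagonal gam)⁻¹ * V).trace *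
              ((Matrix.diagonal lam ⊗ₖ Matrix.diagonal gam)⁻¹ *
                (Matrix.diagonal lam ⊗ₖ H₂) *
                (Matrix.diagonal lam ⊗ₖ Matrix.diagonal gam)⁻¹ *
                (Matrix.diagonal lam ⊗ₖ H₂)).trace := by
  have hp₁0 : (0:ℝ) < (p₁ : ℝ) := by exact_mod_cast hp₁
  set L1 := ∑ i, lam i with hL1
  set L2 := ∑ i, lam i ^ 2 with hL2
  have hne : (Finset.univ : Finset (Fin p₁)).Nonempty := by
    simp [Finset.univ_nonempty_iff, ← Fin.pos_iff_nonempty]; omega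
  have hL2pos : 0 < L2 := Finset.sum_pos (fun i _ => pow_pos (hlam i) 2) hne
  set c : ℝ := L1 / L2 with hc
  have hcL2 : c * L2 = L1 := div_mul_cancel₀ _ hL2pos.ne'
  set x : Fin p₁ → ℝ := fun i => 1 - c * lam i with hx
  set a : Fin p₁ → ℝ := fun i => lam i * x i with ha
  -- sum of a is 0
  have hsa : ∑ i, a i = 0 := by
    have h : ∀ i ∈ Finset.univ, a i = lam i - c * lam i ^ 2 := by
      intro i _; simp only [ha, hx]; ring
    rw [Finset.sum_congr rfl h, Finset.sum_sub_distrib, ← Finset.mul_sum, ← hL1, ← hL2, hcL2,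
      sub_self]
  -- X and its identities
  set X : ℝ := ∑ i, x i with hXdef
  have hX : X = (p₁ : ℝ) - L1 ^ 2 / L2 := by
    rw [hXdef]
    rw [Finset.sum_sub_distrib, ← Finset.mul_sum, ← hL1, Finset.sum_const, Finset.card_univ,
      Fintype.card_fin, nsmul_eq_mul, mul_one, hc]
    ring
  have hXsq : ∑ i, (x i) ^ 2 = X := by
    have h : ∀ i ∈ Finset.univ, (x i) ^ 2 = x i - c * a i := by
      intro i _; simp only [ha, hx]; ring
    rw [Finset.sum_congr rfl h, Finset.sum_sub_distrib, ← Finset.mul_sum, hsa, mul_zero, sub_zero]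
  -- some i0 with x i0 ≠ 0
  have hxne : ∃ i0, x i0 ≠ 0 := by
    by_contra h
    push_neg at h
    apply hnc
    have hc0 : c ≠ 0 := by
      obtain ⟨i, _⟩ := hne
      intro hc0
      have := h i
      rw [hx] at this
      simp only [hc0, zero_mul, sub_zero] at this
      exact one_ne_zero this
    refine ⟨1 / c, fun i => ?_⟩
    have := h i
    simp only [hx, sub_eq_zero] at this
    field_simp
    linarith [this]
  obtain ⟨i0, hxi0⟩ := hxne
  have hai0 : a i0 ≠ 0 := by
    simp only [ha]
    exact mul_ne_zero (hlam i0).ne' hxi0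
  -- indices j0 j1
  set j0 : Fin p₂ := ⟨0, by omega⟩ with hj0
  set j1 : Fin p₂ := ⟨1, by omega⟩ with hj1
  have hj01 : j0 ≠ j1 := by simp [hj0, hj1, Fin.ext_iff]
  set b : Fin p₂ → ℝ := fun j => (if j = j0 then 1 else 0) - (if j = j1 then 1 else 0) with hb
  have hsb : ∑ j, b j = 0 := by
    simp [hb, Finset.sum_sub_distrib, Finset.sum_ite_eq']
  have hbj0 : b j0 = 1 := by simp [hb, hj01]
  -- the matrices
  refine ⟨Matrix.diagonal (fun p : Fin p₁ × Fin p₂ => a p.1 * b p.2), Matrix.isSymm_diagonal _,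
    ?_, ?_, ?_, Matrix.diagonal b, Matrix.isSymm_diagonal _, ?_, ?_⟩
  · -- V ≠ 0
    intro h
    apply hai0
    have := congrFun (congrFun h (i0, j0)) (i0, j0)
    simpa [Matrix.diagonal_apply_eq, hbj0] using this
  · -- ptr1 = 0
    ext i i'
    simp only [ptr1, Matrix.of_apply, Matrix.diagonal_apply, Prod.mk.injEq, Matrix.zero_apply]
    by_cases hii : i = i'
    · subst hii
      simp [← Finset.mul_sum, hsb]
    · simp [hii]
  · -- ptr2 = 0
    ext j j'
    simp only [ptr2, Matrix.of_apply, Matrix.diagonal_apply, Prod.mk.injEq, Matrix.zero_apply]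
    by_cases hjj : j = j'
    · subst hjj
      simp [← Finset.sum_mul, hsa]
    · simp [hjj]
  · -- H₂ ≠ 0
    intro h
    have := congrFun (congrFun h j0) j0
    rw [Matrix.diagonal_apply_eq, hbj0] at this
    simpa using this
  · -- the trace identity
    set v : Fin p₁ × Fin p₂ → ℝ := fun p => lam p.1 * gam p.2 with hv
    have hkron : (Matrix.diagonal lam ⊗ₖ Matrix.diagonal gam) = Matrix.diagonal v :=
      Matrix.diagonal_kronecker_diagonal _ _
    have hinv : (Matrix.diagonal v)⁻¹ = Matrix.diagonal (fun p => (v p)⁻¹) := by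
      apply Matrix.inv_eq_right_inv
      rw [Matrix.diagonal_mul_diagonal]
      have hfun : (fun i => v i * (v i)⁻¹) = fun _ : Fin p₁ × Fin p₂ => (1:ℝ) :=
        funext fun p => mul_inv_cancel₀ (mul_ne_zero (hlam p.1).ne' (hgam p.2).ne')
      rw [hfun, Matrix.diagonal_one]
    have hkron2 : (Matrix.diagonal lam ⊗ₖ Matrix.diagonal b) =
        Matrix.diagonal (fun p : Fin p₁ × Fin p₂ => lam p.1 * b p.2) :=
      Matrix.diagonal_kronecker_diagonal _ _
    rw [hkron, hkron2, hinv]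
    simp only [Matrix.diagonal_mul_diagonal, Matrix.trace_diagonal]
    set T : ℝ := ∑ j, (b j * (gam j)⁻¹) ^ 2 with hT
    have e1 : ∑ p : Fin p₁ × Fin p₂,
        ((v p)⁻¹ * (a p.1 * b p.2) * (v p)⁻¹ * (lam p.1 * b p.2)) = X * T := by
      rw [Fintype.sum_prod_type]
      rw [hXdef, hT, Finset.sum_mul_sum]
      refine Finset.sum_congr rfl fun i _ => Finset.sum_congr rfl fun j _ => ?_
      have h1 : lam i ≠ 0 := (hlam i).ne'
      have h2 : gam j ≠ 0 := (hgam j).ne'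
      simp only [hv, ha]
      field_simp
    have e2 : ∑ p : Fin p₁ × Fin p₂,
        ((v p)⁻¹ * (a p.1 * b p.2) * (v p)⁻¹ * (a p.1 * b p.2)) = X * T := by
      rw [Fintype.sum_prod_type]
      rw [← hXsq, hT, Finset.sum_mul_sum]
      refine Finset.sum_congr rfl fun i _ => Finset.sum_congr rfl fun j _ => ?_
      have h1 : lam i ≠ 0 := (hlam i).ne'
      have h2 : gam j ≠ 0 := (hgam j).ne'
      simp only [hv, ha]
      field_simp
    have e3 : ∑ p : Fin p₁ × Fin p₂,
        ((v p)⁻¹ * (lam p.1 * b p.2) * (v p)⁻¹ * (lam p.1 * b p.2)) = (p₁ : ℝ) * T := by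
      rw [Fintype.sum_prod_type]
      have h : ∀ i ∈ Finset.univ, (∑ j, ((v (i, j))⁻¹ * (lam i * b j) * (v (i, j))⁻¹ *
          (lam i * b j))) = T := by
        intro i _
        rw [hT]
        refine Finset.sum_congr rfl fun j _ => ?_
        have h1 : lam i ≠ 0 := (hlam i).ne'
        have h2 : gam j ≠ 0 := (hgam j).ne'
        simp only [hv]
        field_simp
      rw [Finset.sum_congr rfl h, Finset.sum_const, Finset.card_univ, Fintype.card_fin,
        nsmul_eq_mul]
    rw [e1, e2, e3, hX]
    have hp₁ne : (p₁ : ℝ) ≠ 0 := hp₁0.ne'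
    field_simp
end
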